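/- arXiv:2312.14437 — 2 statements merged into one kernel-verified Lean document; each statement's English description precedes it below -/
import Mathlib

section
/- Suppose for each i ∈ {1,…,n}, δᵢ > 0, μᵢ > 0, σᵢ ≥ 0, νᵢ ≥ 0, σᵢ + νᵢ > 0, and θᵢ ∈ [0,1]. Define ψₙ = (1/n)∑ₖ θₖ σₖ²/(σₖ² + (1-θₖ/n)νₖ²) and φₙ = (1/n)∑ₖ δₖ σₖ μₖ/(σₖ² + (1-θₖ/n)νₖ²). Then it cannot happen that ψₙ = 1 and φₙ = 0 simultaneously. -/
open Finset

theorem stmt_3 (n : ℕ) (hn : 1 ≤ n)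
    (δ θ μ σ ν : Fin n → ℝ)
    (hδ : ∀ i, 0 < δ i) (hθ : ∀ i, θ i ∈ Set.Icc (0:ℝ) 1)
    (hμ : ∀ i, 0 < μ i) (hσ : ∀ i, 0 ≤ σ i) (hν : ∀ i, 0 ≤ ν i)
    (hσν : ∀ i, 0 < σ i + ν i)
    (ψn φn : ℝ)
    (hψn : ψn = (1/(n:ℝ)) * ∑ k, θ k * (σ k)^2 / ((σ k)^2 + (1 - θ k/(n:ℝ)) * (ν k)^2))
    (hφn : φn = (1/(n:ℝ)) * ∑ k, δ k * (σ k) * (μ k) / ((σ k)^2 + (1 - θ k/(n:ℝ)) * (ν k)^2)) :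
    ¬ (ψn = 1 ∧ φn = 0) := by
  rintro ⟨hψ, hφ⟩
  have hn0 : (0:ℝ) < n := by exact_mod_cast hn
  set D : Fin n → ℝ := fun k => (σ k)^2 + (1 - θ k/(n:ℝ)) * (ν k)^2 with hDdef
  have hc : ∀ k, 0 ≤ 1 - θ k/(n:ℝ) := by
    intro k
    have h1 := (hθ k).2
    have h2 : θ k / n ≤ 1 := by
      rw [div_le_one hn0]
      exact h1.trans (by exact_mod_cast hn)
    linarith
  have hDnn : ∀ k, 0 ≤ D k := fun k =>
    add_nonneg (sq_nonneg _) (mul_nonneg (hc k) (sq_nonneg _))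
  have hle : ∀ k, θ k * (σ k)^2 / D k ≤ 1 := by
    intro k
    rcases eq_or_lt_of_le (hDnn k) with h | h
    · rw [← h]; simp
    · rw [div_le_one h]
      have hDk : D k = (σ k)^2 + (1 - θ k/(n:ℝ)) * (ν k)^2 := rfl
      rw [hDk]
      nlinarith [(hθ k).1, (hθ k).2, sq_nonneg (σ k), mul_nonneg (hc k) (sq_nonneg (ν k))]
  have hψ' := hψn
  rw [hψ] at hψ'
  have hsum : ∑ k, θ k * (σ k)^2 / D k = (n:ℝ) := by
    have h : (1:ℝ) * n = ((1/(n:ℝ)) * ∑ k, θ k * (σ k)^2 / D k) * n := by rw [← hψ']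
    rw [one_mul, mul_comm (1/(n:ℝ)) _, mul_assoc, one_div,
      inv_mul_cancel₀ (ne_of_gt hn0), mul_one] at h
    linarith
  have heq : ∀ k, θ k * (σ k)^2 / D k = 1 := by
    have h0 : ∑ k : Fin n, (1 - θ k * (σ k)^2 / D k) = 0 := by
      rw [Finset.sum_sub_distrib, hsum]
      simp
    intro k
    have hk := (Finset.sum_eq_zero_iff_of_nonneg
      (fun i _ => by linarith [hle i])).mp h0 k (Finset.mem_univ k)
    linarith
  have hσpos : ∀ k, 0 < σ k := by
    intro k
    rcases lt_or_eq_of_le (hσ k) with h | h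
    · exact h
    · have := heq k
      rw [← h] at this
      simp at this
  have hDpos : ∀ k, 0 < D k := by
    intro k
    have : (0:ℝ) < (σ k)^2 := pow_pos (hσpos k) 2
    have := mul_nonneg (hc k) (sq_nonneg (ν k))
    show (0:ℝ) < (σ k)^2 + (1 - θ k/(n:ℝ)) * (ν k)^2
    nlinarith [hσpos k]
  have hφpos : 0 < φn := by
    rw [hφn]
    apply mul_pos (by positivity)
    apply Finset.sum_pos
    · intro i _
      exact div_pos (mul_pos (mul_pos (hδ i) (hσpos i)) (hμ i)) (hDpos i)
    · have : Nonempty (Fin n) := Fin.pos_iff_nonempty.mp (by omega)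
      exact Finset.univ_nonempty
  linarith
end

section
/- Let α : [0,T] → ℝ be continuous and satisfy α(T) = 0 and, for all t ∈ [0,T], α(t) = (1/(T+1-t))∫ₜᵀ α(s) ds + (K/2)[(T+1-t) − 1/(T+1-t)] for a constant K. Then α is differentiable and α(t) = K(T-t) for all t ∈ [0,T]; equivalently, the unique solution is α(t) = K(T-t). -/
/-!
Subtracting the explicit solution `K (T - t)` leaves a continuous `β` with
`(T + 1 - t) β(t) = ∫ₜᵀ β`. Writing `B(t) = ∫ₜᵀ β`, we have `β = B / (T + 1 - t)` and `B' = -β`,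
so this quotient has derivative `(B - (T + 1 - t) β) / (T + 1 - t)² = 0`. Hence `β` is constant,
and it vanishes at `t = T`.
-/

open Set intervalIntegral

theorem eqOn_zero_of_mul_eq_integral_of_continuous {a b c : ℝ} (hc : 0 < c) {γ : ℝ → ℝ}
    (hγ : Continuous γ) (h : ∀ t ∈ Icc a b, (b + c - t) * γ t = ∫ s in t..b, γ s) :
    EqOn γ 0 (Icc a b) := by
  have hu : ∀ x ∈ Icc a b, b + c - x ≠ 0 := fun x hx => by linarith [hx.2]
  set f : ℝ → ℝ := fun x => (∫ s in x..b, γ s) / (b + c - x)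
  have hf : ∀ x ∈ Icc a b, f x = γ x := fun x hx => by
    simp only [f, ← h x hx, mul_div_cancel_left₀ _ (hu x hx)]
  have hf' : ∀ x ∈ Icc a b, HasDerivAt f 0 x := fun x hx => by
    have hB : HasDerivAt (fun x => ∫ s in x..b, γ s) (-γ x) x :=
      integral_hasDerivAt_left (hγ.intervalIntegrable _ _) (hγ.stronglyMeasurableAtFilter _ _)
        hγ.continuousAt
    refine (hB.div ((hasDerivAt_id' x).const_sub (b + c)) (hu x hx)).congr_deriv ?_
    rw [← h x hx]
    ring
  have hconst := constant_of_has_deriv_right_zero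
    (fun x hx => (hf' x hx).continuousAt.continuousWithinAt)
    (fun x hx => (hf' x (Ico_subset_Icc_self hx)).hasDerivWithinAt)
  intro t ht
  have hb : b ∈ Icc a b := right_mem_Icc.2 (ht.1.trans ht.2)
  rw [Pi.zero_apply, ← hf t ht, hconst t ht, ← hconst b hb]
  simp [f]

theorem eqOn_zero_of_mul_eq_integral {a b c : ℝ} (hc : 0 < c) {β : ℝ → ℝ}
    (hβ : ContinuousOn β (Icc a b))
    (h : ∀ t ∈ Icc a b, (b + c - t) * β t = ∫ s in t..b, β s) :
    EqOn β 0 (Icc a b) := by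
  rcases lt_or_ge b a with hba | hab
  · simp [Icc_eq_empty_of_lt hba]
  set γ := IccExtend hab ((Icc a b).domRestrict β)
  have hγβ : EqOn γ β (Icc a b) := fun x hx => IccExtend_of_mem hab _ hx
  have hγ : Continuous γ := (continuousOn_iff_continuous_domRestrict.mp hβ).Icc_extend'
  refine hγβ.symm.trans ?_
  refine eqOn_zero_of_mul_eq_integral_of_continuous hc hγ fun t ht => ?_
  rw [hγβ ht, h t ht]
  refine integral_congr fun s hs => (hγβ ?_).symm
  rw [uIcc_of_le ht.2] at hs
  exact Icc_subset_Icc_left ht.1 hs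

theorem integral_mul_sub (K t T : ℝ) : ∫ s in t..T, K * (T - s) = K * (T - t) ^ 2 / 2 := by
  rw [integral_comp_sub_left (fun x => K * x) T, integral_const_mul, integral_id]
  ring

theorem stmt_9_general (T K : ℝ) (α : ℝ → ℝ)
    (hcont : ContinuousOn α (Icc 0 T))
    (heq : ∀ t ∈ Icc (0:ℝ) T,
      α t = (1/(T+1-t)) * (∫ s in t..T, α s)
        + (K/2) * ((T+1-t) - 1/(T+1-t))) :
    DifferentiableOn ℝ α (Icc 0 T) ∧ ∀ t ∈ Icc (0:ℝ) T, α t = K * (T - t) := by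
  have hlin : Differentiable ℝ fun t => K * (T - t) := by fun_prop
  have hres : EqOn (fun t => α t - K * (T - t)) 0 (Icc 0 T) := by
    refine eqOn_zero_of_mul_eq_integral one_pos (hcont.sub hlin.continuous.continuousOn)
      fun t ht => ?_
    have hu : T + 1 - t ≠ 0 := by linarith [ht.2]
    have hα : IntervalIntegrable α MeasureTheory.volume t T :=
      (hcont.mono (Icc_subset_Icc_left ht.1)).intervalIntegrable_of_Icc ht.2
    rw [integral_sub hα (hlin.continuous.intervalIntegrable _ _), integral_mul_sub, heq t ht]
    field_simp
    ring
  have hsol : EqOn α (fun t => K * (T - t)) (Icc 0 T) := fun t ht => sub_eq_zero.mp (hres ht)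
  exact ⟨hlin.differentiableOn.congr hsol, hsol⟩

theorem stmt_9 (T K : ℝ) (hT : 0 < T) (α : ℝ → ℝ)
    (hcont : ContinuousOn α (Icc 0 T)) (hαT : α T = 0)
    (heq : ∀ t ∈ Icc (0:ℝ) T,
      α t = (1/(T+1-t)) * (∫ s in t..T, α s)
        + (K/2) * ((T+1-t) - 1/(T+1-t))) :
    DifferentiableOn ℝ α (Icc 0 T) ∧ ∀ t ∈ Icc (0:ℝ) T, α t = K * (T - t) :=
  stmt_9_general T K α hcont heq
end
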